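/- arXiv:2510.13491 — 8 statements merged into one kernel-verified Lean document; each statement's English description precedes it below -/
import Mathlib

section
/- For every positive integer m, the subspace of SU(2)^m consisting of all tuples (A₁, ..., A_m) such that Aᵢ * Aⱼ = Aⱼ * Aᵢ for all i, j is a connected topological space. -/
/-- `SU(2)`, i.e. `Matrix.specialUnitaryGroup (Fin 2) ℂ`, topologized as a subspace of the
`2 × 2` complex matrices (via the subtype topology). -/
abbrev SU2 := Matrix.specialUnitaryGroup (Fin 2) ℂ

/-- The group structure on `SU(2)` (inverse given by conjugate transpose). -/
noncomputable instance : Group SU2 :=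
  { (inferInstance : Monoid SU2) with
    inv := fun A => ⟨star A.1, by
      refine ⟨⟨?_, ?_⟩, ?_⟩
      · rw [star_star]; exact A.2.1.2
      · rw [star_star]; exact A.2.1.1
      · show Matrix.det (star A.1) = 1
        rw [Matrix.star_eq_conjTranspose, Matrix.det_conjTranspose]
        have h : Matrix.det A.1 = 1 := A.2.2
        rw [h, star_one]⟩
    inv_mul_cancel := fun A => Subtype.ext A.2.1.1 }

/-- The commutator `[a, b] = a * b * a⁻¹ * b⁻¹`. -/
def brk {G : Type*} [Group G] (a b : G) : G := a * b * a⁻¹ * b⁻¹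

/-!
Every element of `SU(2)` is conjugate into the maximal torus `T = {diag(e^{iθ}, e^{-iθ})}`:
conjugate by the element of `SU(2)` whose first column is a unit eigenvector. If some member of a
commuting family is conjugate to a non-central element `t` of `T`, the same conjugation moves the
whole family into the centraliser of `t`, which is `T`; otherwise every member is central. So the
commuting `m`-tuples form the union over `g` of `g T^m g⁻¹`, each a continuous image of `ℝ^m`
containing the identity tuple, and such a union is connected.
-/

open Matrix Complex ComplexConjugate

theorem of_mem_specialUnitaryGroup_fin_two_iff {a b c d : ℂ} :
    !![a, b; c, d] ∈ specialUnitaryGroup (Fin 2) ℂ ↔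
      c = -conj b ∧ d = conj a ∧ normSq a + normSq b = 1 := by
  rw [mem_specialUnitaryGroup_iff, mem_unitaryGroup_iff]
  constructor
  · rintro ⟨hu, hdet⟩
    have hadj : star !![a, b; c, d] = !![d, -b; -c, a] := by
      rw [← adjugate_fin_two_of, ← inv_eq_right_inv hu, Matrix.inv_def, hdet, Ring.inverse_one,
        one_smul]
    have hcb : conj c = -b := congr_fun₂ hadj 0 1
    have hda : conj d = a := congr_fun₂ hadj 1 1
    have hnorm : a * conj a + b * conj b = 1 := by
      simpa [mul_apply] using congr_fun₂ hu 0 0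
    refine ⟨by simpa using congrArg conj hcb, by simpa using congrArg conj hda, ?_⟩
    rw [mul_conj, mul_conj] at hnorm
    exact_mod_cast hnorm
  · rintro ⟨rfl, rfl, h⟩
    have h' : a * conj a + b * conj b = 1 := by
      rw [mul_conj, mul_conj]; exact_mod_cast h
    refine ⟨?_, ?_⟩
    · ext i j
      fin_cases i <;> fin_cases j <;> simp [mul_apply, star_apply, one_apply] <;>
        first | linear_combination h' | ring
    · simp [det_fin_two]; linear_combination h'

theorem mem_specialUnitaryGroup_fin_two_iff {M : Matrix (Fin 2) (Fin 2) ℂ} :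
    M ∈ specialUnitaryGroup (Fin 2) ℂ ↔
      M 1 0 = -conj (M 0 1) ∧ M 1 1 = conj (M 0 0) ∧ normSq (M 0 0) + normSq (M 0 1) = 1 := by
  rw [eta_fin_two M, of_mem_specialUnitaryGroup_fin_two_iff]
  rfl

theorem exists_mulVec_eq_smul_normSq_add_eq_one (M : Matrix (Fin 2) (Fin 2) ℂ) :
    ∃ (μ : ℂ) (v : Fin 2 → ℂ), M *ᵥ v = μ • v ∧
      normSq (v 0) + normSq (v 1) = 1 := by
  obtain ⟨μ, hμ⟩ := Module.End.exists_eigenvalue (toLin' M)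
  obtain ⟨v, hv⟩ := hμ.exists_hasEigenvector
  have hMv : M *ᵥ v = μ • v := by simpa using hv.apply_eq_smul
  have hpos : 0 < normSq (v 0) + normSq (v 1) := by
    by_contra! h
    have h0 : v 0 = 0 := normSq_eq_zero.mp (by linarith [normSq_nonneg (v 0), normSq_nonneg (v 1)])
    have h1 : v 1 = 0 := normSq_eq_zero.mp (by linarith [normSq_nonneg (v 0), normSq_nonneg (v 1)])
    exact hv.2 (funext fun i => by fin_cases i <;> assumption)
  refine ⟨μ, ((√(normSq (v 0) + normSq (v 1)) : ℝ) : ℂ)⁻¹ • v,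
    by rw [mulVec_smul, hMv, smul_comm], ?_⟩
  simp only [Pi.smul_apply, smul_eq_mul, normSq_mul, normSq_inv, normSq_ofReal]
  rw [← mul_add, Real.mul_self_sqrt hpos.le, inv_mul_cancel₀ hpos.ne']

theorem exists_conj_apply_one_zero_eq_zero (A : SU2) :
    ∃ g : SU2, ((g⁻¹ * A * g : SU2) : Matrix (Fin 2) (Fin 2) ℂ) 1 0 = 0 := by
  obtain ⟨μ, v, hv, hnorm⟩ := exists_mulVec_eq_smul_normSq_add_eq_one A.1
  have hv0 := congrFun hv 0
  have hv1 := congrFun hv 1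
  simp only [mulVec, dotProduct, Fin.sum_univ_two, Pi.smul_apply, smul_eq_mul] at hv0 hv1
  set G : Matrix (Fin 2) (Fin 2) ℂ := !![v 0, -conj (v 1); v 1, conj (v 0)]
  have hG : G ∈ specialUnitaryGroup (Fin 2) ℂ :=
    of_mem_specialUnitaryGroup_fin_two_iff.mpr ⟨by simp, rfl, by simpa using hnorm⟩
  refine ⟨⟨G, hG⟩, ?_⟩
  -- the first column `v` of `G` is an eigenvector of `A`, so `G⁻¹ * A * G` preserves `ℂ e₀`
  change (star G * A.1 * G) 1 0 = 0
  simp [G, mul_apply, Fin.sum_univ_two, star_apply]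
  linear_combination v 0 * hv1 - v 1 * hv0

noncomputable def torus (θ : ℝ) : SU2 :=
  ⟨!![exp (θ * I), 0; 0, conj (exp (θ * I))],
    of_mem_specialUnitaryGroup_fin_two_iff.mpr
      ⟨by simp, rfl, by simp [normSq_eq_norm_sq, norm_exp_ofReal_mul_I]⟩⟩

theorem coe_torus (θ : ℝ) :
    (torus θ : Matrix (Fin 2) (Fin 2) ℂ) = !![exp (θ * I), 0; 0, conj (exp (θ * I))] := rfl

theorem torus_add (θ φ : ℝ) : torus (θ + φ) = torus θ * torus φ := by
  ext : 1
  simp [coe_torus, add_mul, exp_add]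

@[simp]
theorem torus_zero : torus 0 = 1 := by
  ext : 1
  simp [coe_torus, one_fin_two]

theorem commute_torus (θ φ : ℝ) : Commute (torus θ) (torus φ) := by
  rw [Commute, SemiconjBy, ← torus_add, add_comm, torus_add]

@[fun_prop]
theorem continuous_torus : Continuous torus := by
  refine continuous_induced_rng.mpr (continuous_matrix fun i j => ?_)
  fin_cases i <;> fin_cases j <;> simp [coe_torus] <;> fun_prop

theorem exists_torus_eq_of_apply_one_zero_eq_zero {C : SU2}
    (hC : (C : Matrix (Fin 2) (Fin 2) ℂ) 1 0 = 0) : ∃ θ : ℝ, torus θ = C := by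
  obtain ⟨h10, h11, hnorm⟩ := mem_specialUnitaryGroup_fin_two_iff.mp C.2
  have h01 : C.1 0 1 = 0 := by simpa [hC] using h10
  rw [h01, map_zero, add_zero, normSq_eq_norm_sq,
    pow_eq_one_iff_of_nonneg (norm_nonneg _) two_ne_zero] at hnorm
  have hexp : exp (arg (C.1 0 0) * I) = C.1 0 0 := by
    simpa [hnorm] using norm_mul_exp_arg_mul_I (C.1 0 0)
  refine ⟨arg (C.1 0 0), Subtype.ext ?_⟩
  rw [coe_torus, hexp]
  conv_rhs => rw [eta_fin_two C.1, h01, hC, h11]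

theorem torus_mem_center {θ : ℝ} (hθ : exp (θ * I) = conj (exp (θ * I))) :
    torus θ ∈ Subgroup.center SU2 := by
  have hscalar : (torus θ : Matrix (Fin 2) (Fin 2) ℂ) = exp (θ * I) • 1 := by
    rw [coe_torus, ← hθ, one_fin_two]
    simp
  refine Subgroup.mem_center_iff.mpr fun g => Subtype.ext ?_
  simp [hscalar]

theorem exists_torus_eq_of_commute {θ : ℝ} (hθ : exp (θ * I) ≠ conj (exp (θ * I))) {C : SU2}
    (hC : Commute C (torus θ)) : ∃ φ : ℝ, torus φ = C := by
  refine exists_torus_eq_of_apply_one_zero_eq_zero ?_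
  have h : C.1 1 0 * exp (θ * I) = conj (exp (θ * I)) * C.1 1 0 := by
    simpa [coe_torus, mul_apply, Fin.sum_univ_two] using
      congr_fun₂ (congrArg Subtype.val hC.eq) 1 0
  by_contra hC10
  exact hθ (mul_left_cancel₀ hC10 (h.trans (mul_comm _ _)))

theorem exists_conj_torus (A : SU2) : ∃ (g : SU2) (θ : ℝ), A = g * torus θ * g⁻¹ := by
  obtain ⟨g, hg⟩ := exists_conj_apply_one_zero_eq_zero A
  obtain ⟨θ, hθ⟩ := exists_torus_eq_of_apply_one_zero_eq_zero hg
  exact ⟨g, θ, by rw [hθ]; group⟩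

theorem exists_conj_torus_of_pairwise_commute {ι : Type*} (A : ι → SU2)
    (hA : ∀ i j, Commute (A i) (A j)) :
    ∃ g : SU2, ∀ i, ∃ θ : ℝ, A i = g * torus θ * g⁻¹ := by
  by_cases h : ∃ k g θ, A k = g * torus θ * g⁻¹ ∧ exp (θ * I) ≠ conj (exp (θ * I))
  · obtain ⟨k, g, θ, hk, hθ⟩ := h
    have hθk : torus θ = g⁻¹ * A k * g := by rw [hk]; group
    refine ⟨g, fun i => ?_⟩
    have hcomm : Commute (g⁻¹ * A i * g) (torus θ) :=
      calc g⁻¹ * A i * g * torus θ = g⁻¹ * (A i * A k) * g := by rw [hθk]; group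
        _ = g⁻¹ * (A k * A i) * g := by rw [(hA i k).eq]
        _ = torus θ * (g⁻¹ * A i * g) := by rw [hθk]; group
    obtain ⟨φ, hφ⟩ := exists_torus_eq_of_commute hθ hcomm
    exact ⟨φ, by rw [hφ]; group⟩
  · push Not at h
    refine ⟨1, fun i => ?_⟩
    obtain ⟨g, θ, hi⟩ := exists_conj_torus (A i)
    have hcentral := Subgroup.mem_center_iff.mp (torus_mem_center (h i g θ hi)) g
    exact ⟨θ, by rw [hi, hcentral]; group⟩

theorem setOf_forall_mul_comm_eq_iUnion (ι : Type*) :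
    {A : ι → SU2 | ∀ i j, A i * A j = A j * A i} =
      ⋃ g : SU2, Set.range fun θ : ι → ℝ => fun i => g * torus (θ i) * g⁻¹ := by
  ext A
  simp only [Set.mem_iUnion, Set.mem_range]
  constructor
  · intro hA
    obtain ⟨g, hg⟩ := exists_conj_torus_of_pairwise_commute A hA
    choose θ hθ using hg
    exact ⟨g, θ, funext fun i => (hθ i).symm⟩
  · rintro ⟨g, θ, rfl⟩ i j
    calc g * torus (θ i) * g⁻¹ * (g * torus (θ j) * g⁻¹)
        _ = g * (torus (θ i) * torus (θ j)) * g⁻¹ := by group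
        _ = g * torus (θ j) * g⁻¹ * (g * torus (θ i) * g⁻¹) := by
          rw [(commute_torus _ _).eq]; group

theorem connected_commuting_tuples_general (m : ℕ) :
    ConnectedSpace {A : Fin m → SU2 | ∀ i j : Fin m, A i * A j = A j * A i} := by
  rw [← isConnected_iff_connectedSpace, setOf_forall_mul_comm_eq_iUnion]
  have hone (g : SU2) :
      (1 : Fin m → SU2) ∈
        Set.range fun θ : Fin m → ℝ => fun i => g * torus (θ i) * g⁻¹ :=
    ⟨0, funext fun i => by simp⟩
  refine ⟨⟨1, Set.mem_iUnion_of_mem 1 (hone 1)⟩,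
    isPreconnected_iUnion ⟨1, Set.mem_iInter.mpr hone⟩ fun g => ?_⟩
  exact (isConnected_range (by fun_prop)).isPreconnected

/-- For every positive integer `m`, the subspace of `SU(2)^m` consisting of mutually
commuting `m`-tuples is connected. -/
theorem connected_commuting_tuples (m : ℕ) (hm : 0 < m) :
    ConnectedSpace {A : Fin m → SU2 | ∀ i j : Fin m, A i * A j = A j * A i} :=
  connected_commuting_tuples_general m
end

section
/- For every element g ∈ SU(2), the fiber {(A, B) ∈ SU(2) × SU(2) : A*B*A⁻¹*B⁻¹ = g} of the commutator map is nonempty and connected (as a subspace of SU(2) × SU(2)). -/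
/-!
Via `a + b i + c j + d k ↦ !![a + b i, c + d i; -c + d i, a - b i]`, `SU(2)` is the group of unit
quaternions, where `[a, b] = g` reads `a b = g b a`. Project the solution set onto `b`. Conjugate
quaternions have equal real parts, and unit quaternions with equal real parts are conjugate, so
the image is the set of unit `b` with `Re ((g - 1) b) = 0`: the unit sphere of a subspace of
dimension at least three, hence connected. Over such a `b` the solutions `a` are the unit vectors
of the kernel of `a ↦ a b - g b a`; it contains `a₀` and `a₀ b` for any solution `a₀` (and is
everything if `b` is real, as then `g = 1`), so it has dimension at least two and its unit sphere
is connected. Finally, a compact set mapping onto a connected Hausdorff space with connected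
fibers is connected.
-/

open Metric Set
open scoped Quaternion

theorem IsCompact.isConnected_of_isConnected_image {X Y : Type*} [TopologicalSpace X]
    [TopologicalSpace Y] [T2Space Y] {s : Set X} {f : X → Y} (hs : IsCompact s)
    (hf : ContinuousOn f s) (himage : IsConnected (f '' s))
    (hfib : ∀ y ∈ f '' s, IsPreconnected (s ∩ f ⁻¹' {y})) : IsConnected s := by
  refine ⟨himage.nonempty.of_image, isPreconnected_iff_subset_of_disjoint_closed.mpr ?_⟩
  intro u v hu hv hsuv huv
  have hdisj : ∀ x ∈ s, x ∈ u → x ∉ v := fun x hx hxu hxv ↦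
    eq_empty_iff_forall_notMem.mp huv x ⟨hx, hxu, hxv⟩
  have hsame : ∀ x ∈ s, ∀ x' ∈ s, f x = f x' → x ∈ u → x' ∈ u := by
    intro x hx x' hx' hxx' hxu
    rcases isPreconnected_iff_subset_of_disjoint_closed.mp (hfib (f x) ⟨x, hx, rfl⟩) u v
      hu hv (inter_subset_left.trans hsuv)
      (subset_empty_iff.mp (huv ▸ inter_subset_inter_left _ inter_subset_left)) with hsub | hsub
    · exact hsub ⟨hx', hxx'.symm⟩
    · exact absurd (hsub ⟨hx, rfl⟩) (hdisj x hx hxu)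
  have hclosed : ∀ w, IsClosed w → IsClosed (f '' (s ∩ w)) := fun w hw ↦
    ((hs.inter_right hw).image_of_continuousOn (hf.mono inter_subset_left)).isClosed
  have hcover : f '' s ⊆ f '' (s ∩ u) ∪ f '' (s ∩ v) := by
    rintro _ ⟨x, hx, rfl⟩
    exact (hsuv hx).imp (fun h ↦ ⟨x, ⟨hx, h⟩, rfl⟩) (fun h ↦ ⟨x, ⟨hx, h⟩, rfl⟩)
  have hdisj_image : f '' s ∩ (f '' (s ∩ u) ∩ f '' (s ∩ v)) = ∅ := by
    refine eq_empty_iff_forall_notMem.mpr ?_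
    rintro _ ⟨-, ⟨x₁, ⟨hx₁, hx₁u⟩, rfl⟩, ⟨x₂, ⟨hx₂, hx₂v⟩, hfx⟩⟩
    exact hdisj x₂ hx₂ (hsame x₁ hx₁ x₂ hx₂ hfx.symm hx₁u) hx₂v
  rcases isPreconnected_iff_subset_of_disjoint_closed.mp himage.2 _ _ (hclosed u hu)
    (hclosed v hv) hcover hdisj_image with himu | himv
  · left
    intro x hx
    obtain ⟨x₁, ⟨hx₁, hx₁u⟩, hfx₁⟩ := himu ⟨x, hx, rfl⟩
    exact hsame x₁ hx₁ x hx hfx₁ hx₁u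
  · right
    intro x hx
    obtain ⟨x₁, ⟨hx₁, hx₁v⟩, hfx₁⟩ := himv ⟨x, hx, rfl⟩
    exact (hsuv hx).resolve_left fun hxu ↦ hdisj x₁ hx₁ (hsame x hx x₁ hx₁ hfx₁.symm hxu) hx₁v

theorem Submodule.isConnected_preimage_coe_sphere {E : Type*} [NormedAddCommGroup E]
    [NormedSpace ℝ E] (W : Submodule ℝ E) (hW : 1 < Module.rank ℝ W) {r : ℝ} (hr : 0 ≤ r) :
    IsConnected (((↑) : sphere (0 : E) r → E) ⁻¹' W) := by
  have himage : ((↑) : sphere (0 : E) r → E) '' ((↑) ⁻¹' (W : Set E)) =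
      ((↑) : W → E) '' sphere 0 r := by
    ext x
    simp [Subtype.image_preimage_coe, and_comm]
  have hconn := (isConnected_sphere hW 0 hr).image _ continuous_subtype_val.continuousOn
  rw [← himage] at hconn
  exact ⟨hconn.nonempty.of_image, Topology.IsInducing.subtypeVal.isPreconnected_image.mp hconn.2⟩

theorem brk_eq_iff {G : Type*} [Group G] {a b g : G} : brk a b = g ↔ a * b = g * b * a := by
  rw [brk, mul_inv_eq_iff_eq_mul, mul_inv_eq_iff_eq_mul]

theorem map_brk {F G H : Type*} [Group G] [Group H] [FunLike F G H] [MonoidHomClass F G H]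
    (f : F) (a b : G) : f (brk a b) = brk (f a) (f b) := by
  simp [brk]

theorem continuous_brk {G : Type*} [TopologicalSpace G] [Group G] [IsTopologicalGroup G] :
    Continuous fun p : G × G ↦ brk p.1 p.2 := by
  unfold brk; fun_prop

theorem MulEquiv.image_prodMap_brk_fiber {G H : Type*} [Group G] [Group H] (e : G ≃* H) (g : G) :
    Prod.map e e '' {p : G × G | brk p.1 p.2 = g} = {p : H × H | brk p.1 p.2 = e g} := by
  ext ⟨x, y⟩
  constructor
  · rintro ⟨⟨a, b⟩, hab, ⟨⟩⟩
    exact (map_brk e a b).symm.trans (congrArg e hab)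
  · intro hxy
    refine ⟨(e.symm x, e.symm y), ?_, by simp⟩
    exact (map_brk e.symm x y).symm.trans ((congrArg e.symm hxy).trans (e.symm_apply_apply g))

namespace Quaternion

theorem re_mul_comm {R : Type*} [CommRing R] (a b : ℍ[R]) : (a * b).re = (b * a).re := by
  simp only [re_mul]; ring

theorem exists_ne_zero_mul_eq_mul {p q : ℍ[ℝ]} (hre : p.re = q.re) (hnorm : ‖p‖ = ‖q‖) :
    ∃ u ≠ 0, u * p = q * u := by
  have hnormSq : normSq p = normSq q := by simp only [normSq_eq_norm_mul_self, hnorm]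
  rw [normSq_def', normSq_def'] at hnormSq
  by_cases him : p.im + q.im = 0
  · have hI : q.imI = -p.imI := by simpa [add_eq_zero_iff_eq_neg'] using congrArg (·.imI) him
    have hJ : q.imJ = -p.imJ := by simpa [add_eq_zero_iff_eq_neg'] using congrArg (·.imJ) him
    have hK : q.imK = -p.imK := by simpa [add_eq_zero_iff_eq_neg'] using congrArg (·.imK) him
    -- `q = star p`, so `u` must anticommute with `p.im`: any pure `u ⟂ p.im` will do.
    -- Witnesses are given by their coordinates: a bare `⟨_, _, _, _⟩` elaborates in
    -- `ℍ[ℝ,-1,0,-1]`, where the `Quaternion` simp lemmas do not fire.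
    by_cases hk : p.imI = 0 ∧ p.imJ = 0
    · obtain ⟨u, hu₀, hu₁, hu₂, hu₃⟩ :
          ∃ u : ℍ[ℝ], u.re = 0 ∧ u.imI = 1 ∧ u.imJ = 0 ∧ u.imK = 0 :=
        ⟨show ℍ[ℝ] from ⟨0, 1, 0, 0⟩, rfl, rfl, rfl, rfl⟩
      refine ⟨u, fun h ↦ by simp [h] at hu₁, ?_⟩
      ext <;> simp [re_mul, imI_mul, imJ_mul, imK_mul, hu₀, hu₁, hu₂, hu₃, hre, hI, hJ, hK, hk.1,
        hk.2]
    · obtain ⟨u, hu₀, hu₁, hu₂, hu₃⟩ :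
          ∃ u : ℍ[ℝ], u.re = 0 ∧ u.imI = p.imJ ∧ u.imJ = -p.imI ∧ u.imK = 0 :=
        ⟨show ℍ[ℝ] from ⟨0, p.imJ, -p.imI, 0⟩, rfl, rfl, rfl, rfl⟩
      refine ⟨u, fun h ↦ hk ⟨?_, ?_⟩, ?_⟩
      · simpa [h] using hu₂
      · simpa [h] using hu₁.symm
      · ext <;> simp [re_mul, imI_mul, imJ_mul, imK_mul, hu₀, hu₁, hu₂, hu₃, hre, hI, hJ, hK] <;>
          ring
  · -- `p.im ^ 2 = -‖p.im‖ ^ 2 = q.im ^ 2`, hence `(p.im + q.im) * p.im = q.im * (p.im + q.im)`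
    refine ⟨p.im + q.im, him, ?_⟩
    ext <;> simp only [re_mul, imI_mul, imJ_mul, imK_mul, re_add, imI_add, imJ_add, imK_add,
      re_im, imI_im, imJ_im, imK_im]
    · linear_combination -hnormSq + (p.re + q.re) * hre
    · linear_combination (p.imI + q.imI) * hre
    · linear_combination (p.imJ + q.imJ) * hre
    · linear_combination (p.imK + q.imK) * hre

theorem exists_mem_sphere_mul_eq_mul {p q : ℍ[ℝ]} (hre : p.re = q.re) (hnorm : ‖p‖ = ‖q‖) :
    ∃ u ∈ sphere (0 : ℍ[ℝ]) 1, u * p = q * u := by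
  obtain ⟨u, hu, h⟩ := exists_ne_zero_mul_eq_mul hre hnorm
  refine ⟨‖u‖⁻¹ • u, ?_, by rw [smul_mul_assoc, h, mul_smul_comm]⟩
  simp [norm_smul, hu]

theorem linearIndependent_one_of_im_ne_zero {b : ℍ[ℝ]} (hb : b.im ≠ 0) :
    LinearIndependent ℝ ![1, b] := by
  refine LinearIndependent.pair_iff.mpr fun s t hst ↦ ?_
  have ht : t = 0 := by
    simpa [hb] using congrArg im hst
  subst ht
  simpa using hst

theorem two_le_finrank_ker_mulRight_sub_mulLeft {a b c : ℍ[ℝ]} (ha : a ≠ 0) (h : a * b = c * a) :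
    2 ≤ Module.finrank ℝ (LinearMap.ker (LinearMap.mulRight ℝ b - LinearMap.mulLeft ℝ c)) := by
  by_cases hb : b.im = 0
  · have hb_real : b = (b.re : ℍ[ℝ]) := by simpa [hb] using (re_add_im b).symm
    have hcb : c = b := mul_right_cancel₀ ha (by rw [← h, hb_real, coe_commutes])
    have hker : LinearMap.ker (LinearMap.mulRight ℝ b - LinearMap.mulLeft ℝ c) = ⊤ := by
      refine LinearMap.ker_eq_top.mpr (LinearMap.ext fun x ↦ ?_)
      simp only [LinearMap.sub_apply, LinearMap.mulRight_apply, LinearMap.mulLeft_apply,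
        LinearMap.zero_apply, hcb]
      rw [hb_real, coe_commutes, sub_self]
    rw [hker, finrank_top, finrank_eq_four]
    norm_num
  · have hcomp : LinearMap.mulLeft ℝ a ∘ ![1, b] = ![a, a * b] := by
      funext i
      fin_cases i <;> simp
    have hind : LinearIndependent ℝ ![a, a * b] :=
      hcomp ▸ (linearIndependent_one_of_im_ne_zero hb).map' (LinearMap.mulLeft ℝ a)
        (LinearMap.ker_eq_bot.mpr (mul_right_injective₀ ha))
    have hspan : Submodule.span ℝ (range ![a, a * b]) ≤
        LinearMap.ker (LinearMap.mulRight ℝ b - LinearMap.mulLeft ℝ c) := by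
      rw [Submodule.span_le, range_subset_iff]
      intro i
      fin_cases i <;> simp [h, mul_assoc]
    simpa [finrank_span_eq_card hind] using Submodule.finrank_mono hspan

-- `QuaternionAlgebra.reₗ` typed on `ℍ[ℝ]`, so that its kernels are submodules of `ℍ[ℝ]`
def reₗ : ℍ[ℝ] →ₗ[ℝ] ℝ := QuaternionAlgebra.reₗ _ _ _

@[simp]
theorem reₗ_apply (a : ℍ[ℝ]) : reₗ a = a.re := rfl

theorem brk_eq_iff_coe {a b g : sphere (0 : ℍ[ℝ]) 1} :
    brk a b = g ↔ (a * b : ℍ[ℝ]) = g * b * a := by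
  rw [brk_eq_iff, Subtype.ext_iff]
  simp

theorem snd_image_brk_fiber (g : sphere (0 : ℍ[ℝ]) 1) :
    Prod.snd '' {p : sphere (0 : ℍ[ℝ]) 1 × sphere (0 : ℍ[ℝ]) 1 | brk p.1 p.2 = g} =
      (↑) ⁻¹' (LinearMap.ker (reₗ ∘ₗ LinearMap.mulLeft ℝ ((g : ℍ[ℝ]) - 1)) :
        Set ℍ[ℝ]) := by
  ext b
  simp only [mem_image, mem_ofPred_eq, Prod.exists, exists_eq_right,
    brk_eq_iff_coe, mem_preimage, SetLike.mem_coe, LinearMap.mem_ker, LinearMap.coe_comp,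
    Function.comp_apply, LinearMap.mulLeft_apply, reₗ_apply, sub_mul, one_mul,
    re_sub, sub_eq_zero]
  constructor
  · rintro ⟨a, hab⟩
    have ha : (a : ℍ[ℝ]) ≠ 0 := ne_zero_of_mem_unit_sphere a
    calc ((g : ℍ[ℝ]) * b).re = (a * b * (a : ℍ[ℝ])⁻¹).re := by
          rw [hab, mul_inv_cancel_right₀ ha]
      _ = ((a : ℍ[ℝ])⁻¹ * (a * b)).re := re_mul_comm _ _
      _ = (b : ℍ[ℝ]).re := by rw [inv_mul_cancel_left₀ ha]
  · intro hre
    obtain ⟨a, ha, hab⟩ := exists_mem_sphere_mul_eq_mul hre.symm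
      (by simp [norm_mul, mem_sphere_zero_iff_norm.mp g.2, mem_sphere_zero_iff_norm.mp b.2])
    exact ⟨⟨a, ha⟩, hab⟩

theorem brk_fiber_inter_snd_preimage (g b : sphere (0 : ℍ[ℝ]) 1) :
    {p : sphere (0 : ℍ[ℝ]) 1 × sphere (0 : ℍ[ℝ]) 1 | brk p.1 p.2 = g} ∩ Prod.snd ⁻¹' {b} =
      (·, b) '' ((↑) ⁻¹' (LinearMap.ker
        (LinearMap.mulRight ℝ (b : ℍ[ℝ]) - LinearMap.mulLeft ℝ (g * b : ℍ[ℝ])) : Set ℍ[ℝ])) := by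
  ext ⟨a, b'⟩
  simp only [mem_inter_iff, mem_ofPred_eq, mem_preimage, mem_singleton_iff, mem_image,
    Prod.mk.injEq, SetLike.mem_coe, LinearMap.mem_ker, LinearMap.sub_apply,
    LinearMap.mulRight_apply, LinearMap.mulLeft_apply, sub_eq_zero, brk_eq_iff_coe]
  constructor
  · rintro ⟨hab, rfl⟩
    exact ⟨a, hab, rfl, rfl⟩
  · rintro ⟨a, hab, rfl, rfl⟩
    exact ⟨hab, rfl⟩

theorem isConnected_brk_fiber (g : sphere (0 : ℍ[ℝ]) 1) :
    IsConnected {p : sphere (0 : ℍ[ℝ]) 1 × sphere (0 : ℍ[ℝ]) 1 | brk p.1 p.2 = g} := by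
  refine (isClosed_eq continuous_brk continuous_const).isCompact.isConnected_of_isConnected_image
    continuous_snd.continuousOn ?_ ?_
  · rw [snd_image_brk_fiber]
    set ℓ := reₗ ∘ₗ LinearMap.mulLeft ℝ ((g : ℍ[ℝ]) - 1)
    have hrank := ℓ.finrank_range_add_finrank_ker
    have hrange := Submodule.finrank_le (LinearMap.range ℓ)
    rw [finrank_eq_four] at hrank
    rw [Module.finrank_self] at hrange
    exact Submodule.isConnected_preimage_coe_sphere _
      (Module.one_lt_rank_of_one_lt_finrank (by omega)) zero_le_one
  · rintro _ ⟨⟨a, b⟩, hab, rfl⟩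
    rw [brk_fiber_inter_snd_preimage]
    refine (Submodule.isConnected_preimage_coe_sphere _ (Module.one_lt_rank_of_one_lt_finrank
      (two_le_finrank_ker_mulRight_sub_mulLeft (ne_zero_of_mem_unit_sphere a)
        (brk_eq_iff_coe.mp hab))) zero_le_one).isPreconnected.image _ ?_
    fun_prop

def toMatrix : ℍ[ℝ] →⋆ₐ[ℝ] Matrix (Fin 2) (Fin 2) ℂ where
  toFun q := !![⟨q.re, q.imI⟩, ⟨q.imJ, q.imK⟩; ⟨-q.imJ, q.imK⟩, ⟨q.re, -q.imI⟩]
  map_one' := by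
    ext i j
    fin_cases i <;> fin_cases j <;> simp [Complex.ext_iff]
  map_mul' x y := by
    ext i j
    fin_cases i <;> fin_cases j <;>
      simp [Matrix.mul_apply, Complex.ext_iff, re_mul, imI_mul, imJ_mul, imK_mul] <;>
      constructor <;> ring
  map_zero' := by
    ext i j
    fin_cases i <;> fin_cases j <;> simp [Complex.ext_iff]
  map_add' x y := by
    ext i j
    fin_cases i <;> fin_cases j <;> simp [Complex.ext_iff] <;> ring
  commutes' r := by
    ext i j
    fin_cases i <;> fin_cases j <;> simp [Complex.ext_iff, Matrix.algebraMap_eq_diagonal]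
  map_star' x := by
    ext i j
    fin_cases i <;> fin_cases j <;> simp [Complex.ext_iff, Matrix.star_apply]

theorem toMatrix_apply (q : ℍ[ℝ]) :
    toMatrix q = !![⟨q.re, q.imI⟩, ⟨q.imJ, q.imK⟩; ⟨-q.imJ, q.imK⟩, ⟨q.re, -q.imI⟩] := rfl

theorem det_toMatrix (q : ℍ[ℝ]) : (toMatrix q).det = normSq q := by
  simp only [toMatrix_apply, Matrix.det_fin_two_of, normSq_def', Complex.ext_iff]
  simp [-Complex.ofReal_pow]
  constructor <;> ring

theorem toMatrix_injective : Function.Injective toMatrix := by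
  intro x y h
  have h₀₀ := congrFun₂ h 0 0
  have h₀₁ := congrFun₂ h 0 1
  simp only [toMatrix_apply, Matrix.of_apply, Matrix.cons_val', Matrix.cons_val_zero,
    Matrix.cons_val_one, Complex.mk.injEq] at h₀₀ h₀₁
  ext <;> tauto

theorem toMatrix_mem_specialUnitaryGroup {q : ℍ[ℝ]} (hq : q ∈ sphere (0 : ℍ[ℝ]) 1) :
    toMatrix q ∈ Matrix.specialUnitaryGroup (Fin 2) ℂ := by
  have hnormSq : normSq q = 1 := by
    rw [normSq_eq_norm_mul_self, mem_sphere_zero_iff_norm.mp hq, mul_one]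
  refine Matrix.mem_specialUnitaryGroup_iff.mpr ⟨Matrix.mem_unitaryGroup_iff'.mpr ?_, ?_⟩
  · rw [← map_star, ← map_mul, star_mul_self, hnormSq, coe_one, map_one]
  · rw [det_toMatrix, hnormSq, Complex.ofReal_one]

theorem exists_toMatrix_eq {A : Matrix (Fin 2) (Fin 2) ℂ}
    (hA : A ∈ Matrix.specialUnitaryGroup (Fin 2) ℂ) : ∃ q : ℍ[ℝ], toMatrix q = A := by
  obtain ⟨hu, hdet⟩ := Matrix.mem_specialUnitaryGroup_iff.mp hA
  -- for `det A = 1`, unitarity says `star A = A⁻¹ = adjugate A`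
  have hstar : star A = A.adjugate := by
    rw [← Matrix.inv_eq_left_inv (Matrix.mem_unitaryGroup_iff'.mp hu), Matrix.inv_def, hdet,
      Ring.inverse_one, one_smul]
  have h₁₀ : A 1 0 = -starRingEnd ℂ (A 0 1) := by
    have h := congrFun₂ hstar 1 0
    simp [Matrix.adjugate_fin_two] at h
    linear_combination h
  have h₁₁ : A 1 1 = starRingEnd ℂ (A 0 0) := by
    simpa [Matrix.adjugate_fin_two] using (congrFun₂ hstar 0 0).symm
  obtain ⟨q, hq₀, hq₁, hq₂, hq₃⟩ : ∃ q : ℍ[ℝ], q.re = (A 0 0).re ∧ q.imI = (A 0 0).im ∧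
      q.imJ = (A 0 1).re ∧ q.imK = (A 0 1).im :=
    ⟨show ℍ[ℝ] from ⟨(A 0 0).re, (A 0 0).im, (A 0 1).re, (A 0 1).im⟩, rfl, rfl, rfl, rfl⟩
  refine ⟨q, ?_⟩
  ext i j
  fin_cases i <;> fin_cases j <;>
    simp [toMatrix_apply, Complex.ext_iff, hq₀, hq₁, hq₂, hq₃, h₁₀, h₁₁]

noncomputable def unitSphereToSU2 : sphere (0 : ℍ[ℝ]) 1 →* SU2 where
  toFun q := ⟨toMatrix q, toMatrix_mem_specialUnitaryGroup q.2⟩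
  map_one' := Subtype.ext (map_one toMatrix)
  map_mul' a b := Subtype.ext (map_mul toMatrix (a : ℍ[ℝ]) b)

theorem unitSphereToSU2_bijective : Function.Bijective unitSphereToSU2 := by
  refine ⟨fun a b h ↦ Subtype.ext (toMatrix_injective (congrArg Subtype.val h)), fun A ↦ ?_⟩
  obtain ⟨q, hq⟩ := exists_toMatrix_eq A.2
  have hnormSq : normSq q = 1 := by
    exact_mod_cast (det_toMatrix q).symm.trans (hq ▸ A.2.2)
  refine ⟨⟨q, mem_sphere_zero_iff_norm.mpr ?_⟩, Subtype.ext hq⟩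
  rwa [normSq_eq_norm_mul_self, ← sq, pow_eq_one_iff_of_nonneg (norm_nonneg q) two_ne_zero]
    at hnormSq

theorem continuous_unitSphereToSU2 : Continuous unitSphereToSU2 :=
  (toMatrix.toLinearMap.continuous_of_finiteDimensional.comp continuous_subtype_val).subtype_mk _

end Quaternion

/-- Every fiber of the commutator map `μ : SU(2) × SU(2) → SU(2)`, `(A, B) ↦ [A,B]`,
is nonempty and connected. -/
theorem commutator_fiber_nonempty_and_connected (g : SU2) :
    ({p : SU2 × SU2 | brk p.1 p.2 = g}).Nonempty ∧
    IsConnected {p : SU2 × SU2 | brk p.1 p.2 = g} := by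
  set e := MulEquiv.ofBijective _ Quaternion.unitSphereToSU2_bijective
  have he : Continuous e := Quaternion.continuous_unitSphereToSU2
  have hfiber := e.image_prodMap_brk_fiber (e.symm g)
  rw [e.apply_symm_apply] at hfiber
  have hconn := (Quaternion.isConnected_brk_fiber (e.symm g)).image _
    (he.prodMap he).continuousOn
  rw [hfiber] at hconn
  exact ⟨hconn.nonempty, hconn⟩
end

section
/- For A, B ∈ SU(2), one has [A,B] = -1 (the negative of the identity matrix) if and only if the traces of the underlying matrices of A, of B, and of A*B are all zero: [A,B] = -1 ↔ (tr(A) = 0 ∧ tr(B) = 0 ∧ tr(A*B) = 0). -/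
private lemma CH2' (a b c d : ℂ) (h : a*d - b*c = 1) :
    !![a,b;c,d] * !![a,b;c,d] = (a+d) • !![a,b;c,d] - 1 := by
  rw [Matrix.mul_fin_two, Matrix.one_fin_two]
  ext i j
  fin_cases i <;> fin_cases j <;>
    simp [Matrix.smul_apply, smul_eq_mul] <;> first | ring1 | linear_combination -h

/-- Cayley–Hamilton for 2×2 matrices of determinant one. -/
private lemma CH2 (M : Matrix (Fin 2) (Fin 2) ℂ) (h : M.det = 1) :
    M * M = M.trace • M - 1 := by
  rw [Matrix.det_fin_two] at h
  rw [Matrix.eta_fin_two M, Matrix.trace_fin_two_of]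
  exact CH2' _ _ _ _ h

private lemma star_unique (M X : Matrix (Fin 2) (Fin 2) ℂ)
    (h1 : star M * M = 1) (h2 : M * X = 1) : star M = X := by
  calc star M = star M * (M * X) := by rw [h2, mul_one]
  _ = (star M * M) * X := by rw [mul_assoc]
  _ = X := by rw [h1, one_mul]

private lemma star_eq_neg (M : Matrix (Fin 2) (Fin 2) ℂ)
    (h1 : star M * M = 1) (hd : M.det = 1) (ht : M.trace = 0) : star M = -M := by
  refine star_unique M (-M) h1 ?_
  have h := CH2 M hd
  rw [ht, zero_smul, zero_sub] at h
  rw [mul_neg, h, neg_neg]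

private lemma trace_snd_zero (M N : Matrix (Fin 2) (Fin 2) ℂ)
    (hM1 : star M * M = 1) (hN1 : star N * N = 1)
    (h : M * N * star M * star N = -1) : N.trace = 0 := by
  have e1 : M * N * star M = -N := by
    have := congrArg (· * N) h
    simpa [mul_assoc, hN1] using this
  have e2 : Matrix.trace (M * N * star M) = Matrix.trace N := by
    rw [Matrix.trace_mul_comm, ← mul_assoc, hM1, one_mul]
  have e3 : Matrix.trace N = -Matrix.trace N := by
    have := congrArg Matrix.trace e1
    rw [e2] at this
    simpa using this
  linear_combination e3 / 2

private lemma key (M N : Matrix (Fin 2) (Fin 2) ℂ)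
    (hM1 : star M * M = 1) (hM2 : M * star M = 1) (hMd : M.det = 1)
    (hN1 : star N * N = 1) (hN2 : N * star N = 1) (hNd : N.det = 1) :
    M * N * star M * star N = -1 ↔
      (M.trace = 0 ∧ N.trace = 0 ∧ (M * N).trace = 0) := by
  have hd : (M * N).det = 1 := by rw [Matrix.det_mul, hMd, hNd, one_mul]
  constructor
  · intro h
    have hsh : N * M * star N * star M = -1 := by
      have := congrArg star h
      simpa [star_mul, mul_assoc] using this
    have hN0 : N.trace = 0 := trace_snd_zero M N hM1 hN1 h
    have hM0 : M.trace = 0 := trace_snd_zero N M hN1 hM1 hsh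
    refine ⟨hM0, hN0, ?_⟩
    have sM := star_eq_neg M hM1 hMd hM0
    have sN := star_eq_neg N hN1 hNd hN0
    rw [sM, sN] at h
    have h'' : (M * N) * (M * N) = -1 := by
      rw [← h]
      simp [mul_assoc, mul_neg, neg_mul]
    have hch := CH2 (M * N) hd
    rw [h''] at hch
    have e : (M * N).trace • (M * N) = 0 := by
      have h3 := sub_eq_iff_eq_add.mp hch.symm
      rw [h3, neg_add_cancel]
    have e2 := congrArg (· * (star N * star M)) e
    simp only [smul_mul_assoc, zero_mul] at e2
    rw [show M * N * (star N * star M) = M * ((N * star N) * star M) by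
      rw [mul_assoc, ← mul_assoc N], hN2, one_mul, hM2] at e2
    have e3 := congrArg (fun X : Matrix (Fin 2) (Fin 2) ℂ => X 0 0) e2
    simpa using e3
  · rintro ⟨hM0, hN0, hAB0⟩
    have sM := star_eq_neg M hM1 hMd hM0
    have sN := star_eq_neg N hN1 hNd hN0
    rw [sM, sN]
    have hch := CH2 (M * N) hd
    rw [hAB0, zero_smul, zero_sub] at hch
    calc M * N * -M * -N = (M * N) * (M * N) := by
          simp [mul_neg, neg_mul, mul_assoc]
      _ = -1 := hch

/-- For `A, B ∈ SU(2)`: `[A,B] = -1` iff the traces of (the underlying matrices of)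
`A`, `B` and `A*B` all vanish. -/
theorem commutator_eq_neg_one_iff_traces_zero (A B : SU2) :
    ((brk A B : SU2) : Matrix (Fin 2) (Fin 2) ℂ) = -1 ↔
      (Matrix.trace (A : Matrix (Fin 2) (Fin 2) ℂ) = 0 ∧
       Matrix.trace (B : Matrix (Fin 2) (Fin 2) ℂ) = 0 ∧
       Matrix.trace ((A * B : SU2) : Matrix (Fin 2) (Fin 2) ℂ) = 0) := by
  have hAd : Matrix.det (A : Matrix (Fin 2) (Fin 2) ℂ) = 1 := A.2.2
  have hBd : Matrix.det (B : Matrix (Fin 2) (Fin 2) ℂ) = 1 := B.2.2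
  have hcoe : ((brk A B : SU2) : Matrix (Fin 2) (Fin 2) ℂ)
      = (A : Matrix (Fin 2) (Fin 2) ℂ) * B * star (A : Matrix (Fin 2) (Fin 2) ℂ)
        * star (B : Matrix (Fin 2) (Fin 2) ℂ) := rfl
  have hcoe2 : ((A * B : SU2) : Matrix (Fin 2) (Fin 2) ℂ)
      = (A : Matrix (Fin 2) (Fin 2) ℂ) * B := rfl
  rw [hcoe, hcoe2]
  exact key _ _ A.2.1.1 A.2.1.2 hAd B.2.1.1 B.2.1.2 hBd
end

section
/- If A ∈ SU(2) is not central, i.e., A ≠ 1 and A ≠ -1, then the centralizer of A in SU(2) (the subgroup Subgroup.centralizer {A}) is a commutative group. -/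
private lemma key_c (A B C : Matrix (Fin 2) (Fin 2) ℂ) (hB : A * B = B * A) (hC : A * C = C * A)
    (hc : A 1 0 ≠ 0) : B * C = C * B := by
  have e1 := congr_fun (congr_fun hB 0) 0
  have e3 := congr_fun (congr_fun hB 1) 0
  have f1 := congr_fun (congr_fun hC 0) 0
  have f3 := congr_fun (congr_fun hC 1) 0
  simp only [Matrix.mul_apply, Fin.sum_univ_two] at e1 e3 f1 f3
  ext i j
  fin_cases i <;> fin_cases j <;>
    simp only [Matrix.mul_apply, Fin.sum_univ_two, Fin.mk_zero, Fin.mk_one]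
  · apply mul_left_cancel₀ hc
    linear_combination (-(C 1 0)) * e1 + (B 1 0) * f1
  · apply mul_left_cancel₀ (mul_ne_zero hc hc)
    linear_combination (A 1 0 * C 0 1) * e3 - (A 1 0 * B 0 1) * f3 +
      ((A 0 0 - A 1 1) * C 1 0) * e1 - ((A 0 0 - A 1 1) * B 1 0) * f1
  · apply mul_left_cancel₀ hc
    linear_combination (B 1 0) * f3 - (C 1 0) * e3
  · apply mul_left_cancel₀ hc
    linear_combination (C 1 0) * e1 - (B 1 0) * f1

open Matrix in
private lemma key_b (A B C : Matrix (Fin 2) (Fin 2) ℂ) (hB : A * B = B * A) (hC : A * C = C * A)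
    (hb : A 0 1 ≠ 0) : B * C = C * B := by
  have hBt : Aᵀ * Bᵀ = Bᵀ * Aᵀ := by
    rw [← Matrix.transpose_mul, ← hB, Matrix.transpose_mul]
  have hCt : Aᵀ * Cᵀ = Cᵀ * Aᵀ := by
    rw [← Matrix.transpose_mul, ← hC, Matrix.transpose_mul]
  have hbt : Aᵀ 1 0 ≠ 0 := by simpa using hb
  have h := key_c Aᵀ Bᵀ Cᵀ hBt hCt hbt
  have h2 := congrArg Matrix.transpose h
  simpa [Matrix.transpose_mul] using h2.symm

private lemma key_diag (A B C : Matrix (Fin 2) (Fin 2) ℂ) (hB : A * B = B * A)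
    (hC : A * C = C * A) (hb : A 0 1 = 0) (hc : A 1 0 = 0) (hd : A 0 0 ≠ A 1 1) :
    B * C = C * B := by
  have hd' : A 0 0 - A 1 1 ≠ 0 := sub_ne_zero.mpr hd
  have e2 := congr_fun (congr_fun hB 0) 1
  have e3 := congr_fun (congr_fun hB 1) 0
  have f2 := congr_fun (congr_fun hC 0) 1
  have f3 := congr_fun (congr_fun hC 1) 0
  simp only [Matrix.mul_apply, Fin.sum_univ_two, hb, hc, zero_mul, mul_zero, add_zero,
    zero_add] at e2 e3 f2 f3
  have hq : B 0 1 = 0 := by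
    apply mul_left_cancel₀ hd'; linear_combination e2
  have hr : B 1 0 = 0 := by
    apply mul_left_cancel₀ hd'; linear_combination -e3
  have hy : C 0 1 = 0 := by
    apply mul_left_cancel₀ hd'; linear_combination f2
  have hz : C 1 0 = 0 := by
    apply mul_left_cancel₀ hd'; linear_combination -f3
  ext i j
  fin_cases i <;> fin_cases j <;>
    simp only [Matrix.mul_apply, Fin.sum_univ_two, Fin.mk_zero, Fin.mk_one, hq, hr, hy, hz,
      zero_mul, mul_zero, add_zero, zero_add] <;> ring

/-- If `A ∈ SU(2)` is not central (`A ≠ 1` and `A ≠ -1`), then the centralizer of `A` in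
`SU(2)` is abelian: any two of its elements commute. -/
theorem centralizer_abelian_of_not_central (A : SU2) (h1 : A ≠ 1)
    (h2 : (A : Matrix (Fin 2) (Fin 2) ℂ) ≠ -1) :
    ∀ x ∈ Subgroup.centralizer ({A} : Set SU2),
      ∀ y ∈ Subgroup.centralizer ({A} : Set SU2), x * y = y * x := by
  intro x hx y hy
  have hxA : (A : Matrix (Fin 2) (Fin 2) ℂ) * x = x * A := by
    have := Subgroup.mem_centralizer_iff.mp hx A (Set.mem_singleton A)
    exact congrArg Subtype.val this
  have hyA : (A : Matrix (Fin 2) (Fin 2) ℂ) * y = y * A := by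
    have := Subgroup.mem_centralizer_iff.mp hy A (Set.mem_singleton A)
    exact congrArg Subtype.val this
  apply Subtype.ext
  show (x : Matrix (Fin 2) (Fin 2) ℂ) * y = (y : Matrix (Fin 2) (Fin 2) ℂ) * x
  set M := (A : Matrix (Fin 2) (Fin 2) ℂ) with hM
  by_cases hc : M 1 0 ≠ 0
  · exact key_c M x y hxA hyA hc
  by_cases hb : M 0 1 ≠ 0
  · exact key_b M x y hxA hyA hb
  push_neg at hc hb
  by_cases hd : M 0 0 = M 1 1
  · exfalso
    have hdet : M.det = 1 := A.2.2
    rw [Matrix.det_fin_two] at hdet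
    have hsq : (M 0 0 - 1) * (M 0 0 + 1) = 0 := by
      linear_combination hdet + M 0 0 * hd + M 0 1 * hc
    rcases mul_eq_zero.mp hsq with h | h
    · have ha : M 0 0 = 1 := by linear_combination h
      apply h1
      apply Subtype.ext
      show M = 1
      ext i j
      fin_cases i <;> fin_cases j <;>
        simp [Matrix.one_apply, ha, hb, hc, ← hd]
    · have ha : M 0 0 = -1 := by linear_combination h
      apply h2
      show M = -1
      ext i j
      fin_cases i <;> fin_cases j <;>
        simp [Matrix.one_apply, ha, hb, hc, ← hd]
  · exact key_diag M x y hxA hyA hb hc hd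
end

section
/- Let π be the genus-3 surface group, presented as the PresentedGroup on six generators a₁, b₁, a₂, b₂, a₃, b₃ with the single relator [a₁,b₁]*[a₂,b₂]*[a₃,b₃], and write α₁, β₁, α₂, β₂, α₃, β₃ for the images of the generators in π and χ := [α₃,β₃]*α₁. Then there exists a group homomorphism f : π →* π with f(α₁) = χ*α₁*χ⁻¹, f(β₁) = β₁*α₁*χ⁻¹, f(α₂) = α₂, f(β₂) = β₂, f(α₃) = χ*α₃*χ⁻¹, f(β₃) = χ*β₃*χ⁻¹; moreover f(χ) = χ, and for every natural number n the iterate fⁿ satisfies fⁿ(α₁) = χⁿ*α₁*χ⁻ⁿ, fⁿ(β₁) = β₁*α₁ⁿ*χ⁻ⁿ, fⁿ(α₂) = α₂, fⁿ(β₂) = β₂, fⁿ(α₃) = χⁿ*α₃*χ⁻ⁿ, and fⁿ(β₃) = χⁿ*β₃*χ⁻ⁿ. -/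
/-- The single relator `[a₁,b₁]*[a₂,b₂]*[a₃,b₃]` for the genus-3 surface group, in the
free group on the six generators `a₁, b₁, a₂, b₂, a₃, b₃` (indexed by `Fin 6` in this
order). -/
def surfaceRels : Set (FreeGroup (Fin 6)) :=
  {brk (FreeGroup.of 0) (FreeGroup.of 1) * brk (FreeGroup.of 2) (FreeGroup.of 3) *
    brk (FreeGroup.of 4) (FreeGroup.of 5)}

/-- The genus-3 surface group, as a presented group. -/
abbrev SurfaceGroup3 := PresentedGroup surfaceRels

/-- The images `α₁, β₁, α₂, β₂, α₃, β₃` of the generators in the surface group. -/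
def gen (i : Fin 6) : SurfaceGroup3 := PresentedGroup.of i

/-- χ := [α₃,β₃]*α₁ -/
noncomputable def chi : SurfaceGroup3 := brk (gen 4) (gen 5) * gen 0

/-- images of the generators under the endomorphism -/
noncomputable def Fmap : Fin 6 → SurfaceGroup3 := fun i =>
  match i with
  | 0 => chi * gen 0 * chi⁻¹
  | 1 => gen 1 * gen 0 * chi⁻¹
  | 2 => gen 2
  | 3 => gen 3
  | 4 => chi * gen 4 * chi⁻¹
  | 5 => chi * gen 5 * chi⁻¹

lemma Fmap0 : Fmap 0 = chi * gen 0 * chi⁻¹ := rfl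
lemma Fmap1 : Fmap 1 = gen 1 * gen 0 * chi⁻¹ := rfl
lemma Fmap2 : Fmap 2 = gen 2 := rfl
lemma Fmap3 : Fmap 3 = gen 3 := rfl
lemma Fmap4 : Fmap 4 = chi * gen 4 * chi⁻¹ := rfl
lemma Fmap5 : Fmap 5 = chi * gen 5 * chi⁻¹ := rfl

lemma surface_rel :
    brk (gen 0) (gen 1) * brk (gen 2) (gen 3) * brk (gen 4) (gen 5) = 1 := by
  have h : PresentedGroup.mk surfaceRels
      (brk (FreeGroup.of 0) (FreeGroup.of 1) * brk (FreeGroup.of 2) (FreeGroup.of 3) *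
        brk (FreeGroup.of 4) (FreeGroup.of 5)) = 1 := by
    apply (QuotientGroup.eq_one_iff _).mpr
    exact Subgroup.subset_normalClosure rfl
  simpa [brk, map_mul, map_inv, gen, PresentedGroup.of] using h

lemma rel23 :
    gen 2 * gen 3 * (gen 2)⁻¹ * (gen 3)⁻¹ =
      (brk (gen 0) (gen 1))⁻¹ * (brk (gen 4) (gen 5))⁻¹ := by
  have h := surface_rel
  have h' := congrArg
    (fun x => (brk (gen 0) (gen 1))⁻¹ * x * (brk (gen 4) (gen 5))⁻¹) h
  simp only [brk] at h' ⊢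
  rw [mul_one] at h'
  rw [← h']
  group

lemma lift_rels : ∀ r ∈ surfaceRels, FreeGroup.lift Fmap r = 1 := by
  intro r hr
  rcases hr with rfl
  simp only [brk, map_mul, map_inv, FreeGroup.lift_apply_of, Fmap0, Fmap1, Fmap2, Fmap3, Fmap4,
    Fmap5]
  rw [show gen 2 * gen 3 * (gen 2)⁻¹ * (gen 3)⁻¹ =
      (brk (gen 0) (gen 1))⁻¹ * (brk (gen 4) (gen 5))⁻¹ from rel23]
  simp only [brk, chi]
  group

noncomputable def fEnd : SurfaceGroup3 →* SurfaceGroup3 := PresentedGroup.toGroup lift_rels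

lemma fEnd_gen (i : Fin 6) : fEnd (gen i) = Fmap i := PresentedGroup.toGroup.of lift_rels

lemma fEnd_chi : fEnd chi = chi := by
  simp only [chi, brk, map_mul, map_inv, fEnd_gen, Fmap0, Fmap4, Fmap5]
  group

/-- There is an endomorphism `f` of the genus-3 surface group realizing the action of the
bounding pair map `Φ` on the generators; it fixes `χ := [α₃,β₃]*α₁`, and its `n`-th
iterate acts by `α₁ ↦ χⁿα₁χ⁻ⁿ`, `β₁ ↦ β₁α₁ⁿχ⁻ⁿ`, `α₂ ↦ α₂`, `β₂ ↦ β₂`,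
`α₃ ↦ χⁿα₃χ⁻ⁿ`, `β₃ ↦ χⁿβ₃χ⁻ⁿ`. -/
theorem exists_bounding_pair_endomorphism :
    ∃ f : SurfaceGroup3 →* SurfaceGroup3,
      (f (gen 0) = (brk (gen 4) (gen 5) * gen 0) * gen 0 * (brk (gen 4) (gen 5) * gen 0)⁻¹ ∧
       f (gen 1) = gen 1 * gen 0 * (brk (gen 4) (gen 5) * gen 0)⁻¹ ∧
       f (gen 2) = gen 2 ∧
       f (gen 3) = gen 3 ∧
       f (gen 4) = (brk (gen 4) (gen 5) * gen 0) * gen 4 * (brk (gen 4) (gen 5) * gen 0)⁻¹ ∧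
       f (gen 5) = (brk (gen 4) (gen 5) * gen 0) * gen 5 * (brk (gen 4) (gen 5) * gen 0)⁻¹) ∧
      f (brk (gen 4) (gen 5) * gen 0) = brk (gen 4) (gen 5) * gen 0 ∧
      ∀ n : ℕ,
        (⇑f)^[n] (gen 0) =
            (brk (gen 4) (gen 5) * gen 0) ^ n * gen 0 * ((brk (gen 4) (gen 5) * gen 0) ^ n)⁻¹ ∧
        (⇑f)^[n] (gen 1) = gen 1 * (gen 0) ^ n * ((brk (gen 4) (gen 5) * gen 0) ^ n)⁻¹ ∧
        (⇑f)^[n] (gen 2) = gen 2 ∧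
        (⇑f)^[n] (gen 3) = gen 3 ∧
        (⇑f)^[n] (gen 4) =
            (brk (gen 4) (gen 5) * gen 0) ^ n * gen 4 * ((brk (gen 4) (gen 5) * gen 0) ^ n)⁻¹ ∧
        (⇑f)^[n] (gen 5) =
            (brk (gen 4) (gen 5) * gen 0) ^ n * gen 5 * ((brk (gen 4) (gen 5) * gen 0) ^ n)⁻¹ := by
  refine ⟨fEnd, ⟨fEnd_gen 0, fEnd_gen 1, fEnd_gen 2, fEnd_gen 3, fEnd_gen 4, fEnd_gen 5⟩,
    fEnd_chi, ?_⟩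
  have hchi : brk (gen 4) (gen 5) * gen 0 = chi := rfl
  intro n
  induction n with
  | zero => simp
  | succ n ih =>
    obtain ⟨h0, h1, h2, h3, h4, h5⟩ := ih
    have hpow : fEnd (chi ^ n) = chi ^ n := by rw [map_pow, fEnd_chi]
    rw [hchi] at *
    refine ⟨?_, ?_, ?_, ?_, ?_, ?_⟩ <;>
      rw [Function.iterate_succ_apply'] <;>
      simp only [h0, h1, h2, h3, h4, h5, map_mul, map_inv, map_pow, fEnd_chi, fEnd_gen,
        Fmap0, Fmap1, Fmap2, Fmap3, Fmap4, Fmap5, pow_succ, conj_pow] <;>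
      group
end

section
/- For every natural number n, the subspace of SU(2)^3 consisting of all triples (A, B, C) such that Aⁿ*B = B*Aⁿ, Aⁿ*C = C*Aⁿ, and B*C = C*B is connected. -/
/-!
Write `g ∈ SU(2)` as `re g • 1 + im g` with `im g` traceless; then
`im g * im g = (re g ^ 2 - 1) • 1`. If `g ≠ ±1`, `J = im g / √(1 - re g ^ 2)` is a traceless
element of `SU(2)` in the span of `1` and `g`, and `θ ↦ cos θ • 1 + sin θ • J` is a circle
through `1` and `g` commuting with everything that commutes with `g`. If `g = ±1`, any traceless
`J` in the centralizer of the relevant commuting family does. So every element of the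
centralizer of a commuting set `S` is joined to `1` inside that centralizer, and `(A, B, C)` is
joined to `(1, 1, 1)` by moving `A`, then `B` in the centralizer of `Aⁿ`, then `C` in that of
`{Aⁿ, B}`.
-/

open Matrix
open scoped ComplexOrder

theorem Matrix.adjugate_fin_two_eq_trace_smul_sub {R : Type*} [CommRing R]
    (A : Matrix (Fin 2) (Fin 2) R) : adjugate A = trace A • 1 - A := by
  ext i j
  fin_cases i <;> fin_cases j <;> simp [adjugate_fin_two, trace_fin_two]

theorem Matrix.det_fin_two_smul_one_add_smul {R : Type*} [CommRing R]
    (A : Matrix (Fin 2) (Fin 2) R) (u v : R) :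
    det (u • 1 + v • A) = u ^ 2 + u * v * trace A + v ^ 2 * det A := by
  simp only [det_fin_two, trace_fin_two, Matrix.add_apply, Matrix.smul_apply, smul_eq_mul,
    one_apply_eq, one_apply_ne zero_ne_one, one_apply_ne one_ne_zero]
  ring

theorem Matrix.mem_specialUnitaryGroup_iff_star_eq_adjugate {n α : Type*} [Fintype n]
    [DecidableEq n] [CommRing α] [StarRing α] {A : Matrix n n α} :
    A ∈ specialUnitaryGroup n α ↔ det A = 1 ∧ star A = adjugate A := by
  rw [mem_specialUnitaryGroup_iff, mem_unitaryGroup_iff]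
  constructor
  · rintro ⟨hA, hdet⟩
    refine ⟨hdet, ?_⟩
    rw [← inv_eq_right_inv hA, inv_def, hdet, Ring.inverse_one, one_smul]
  · rintro ⟨hdet, hstar⟩
    rw [hstar, mul_adjugate, hdet, one_smul]
    exact ⟨rfl, rfl⟩

theorem Commute.smul_one_add_smul_right {R A : Type*} [CommSemiring R] [Semiring A] [Algebra R A]
    {a b : A} (h : Commute a b) (u v : R) : Commute a (u • 1 + v • b) :=
  ((Commute.one_right a).smul_right u).add_right (h.smul_right v)

namespace SU2

local notation "M₂" => Matrix (Fin 2) (Fin 2) ℂ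

-- The real part of `g` viewed as a unit quaternion.
noncomputable def re (g : SU2) : ℝ := (trace (g : M₂)).re / 2

theorem star_coe_eq_trace_smul_sub (g : SU2) : star (g : M₂) = trace (g : M₂) • 1 - g := by
  rw [← adjugate_fin_two_eq_trace_smul_sub]
  exact (mem_specialUnitaryGroup_iff_star_eq_adjugate.mp g.2).2

theorem trace_coe (g : SU2) : trace (g : M₂) = (2 * re g : ℝ) := by
  have h : star (trace (g : M₂)) = trace (g : M₂) := by
    rw [← trace_conjTranspose, ← star_eq_conjTranspose, star_coe_eq_trace_smul_sub, trace_sub,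
      trace_smul, trace_one]
    simp only [Fintype.card_fin, Nat.cast_ofNat, smul_eq_mul]
    ring
  rw [re, mul_div_cancel₀ _ two_ne_zero]
  exact (Complex.conj_eq_iff_re.mp h).symm

theorem smul_one_add_smul_mem (g : SU2) {u v : ℝ} (h : u ^ 2 + 2 * u * v * re g + v ^ 2 = 1) :
    (u : ℂ) • (1 : M₂) + (v : ℂ) • (g : M₂) ∈ specialUnitaryGroup (Fin 2) ℂ := by
  have hdet : det (g : M₂) = 1 := g.2.2
  refine mem_specialUnitaryGroup_iff_star_eq_adjugate.mpr ⟨?_, ?_⟩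
  · rw [det_fin_two_smul_one_add_smul, hdet, trace_coe]
    exact_mod_cast (by linear_combination h : u ^ 2 + u * v * (2 * re g) + v ^ 2 * 1 = 1)
  · rw [adjugate_fin_two_eq_trace_smul_sub, star_add, star_smul, star_smul, star_one,
      star_coe_eq_trace_smul_sub, trace_add, trace_smul, trace_smul, trace_one, trace_coe]
    simp only [Complex.star_def, Complex.conj_ofReal, Fintype.card_fin, smul_eq_mul]
    module

theorem commute_iff_coe {g h : SU2} : Commute g h ↔ Commute (g : M₂) h := Subtype.ext_iff

noncomputable def im (g : SU2) : M₂ := g - (re g : ℂ) • 1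

theorem star_im (g : SU2) : star (im g) = -im g := by
  rw [im, star_sub, star_smul, star_one, star_coe_eq_trace_smul_sub, trace_coe]
  simp only [Complex.star_def, Complex.conj_ofReal]
  push_cast
  module

theorem coe_mul_self (g : SU2) : (g : M₂) * g = (2 * re g : ℂ) • (g : M₂) - 1 := by
  have hunit : (g : M₂) * star (g : M₂) = 1 := mem_unitaryGroup_iff.mp g.2.1
  rw [star_coe_eq_trace_smul_sub, trace_coe, mul_sub, mul_smul_comm, mul_one] at hunit
  push_cast at hunit
  rw [← hunit]
  abel

theorem im_mul_im (g : SU2) : im g * im g = ((re g : ℂ) ^ 2 - 1) • 1 := by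
  rw [im, sub_mul, mul_sub, mul_sub, smul_mul_assoc, mul_smul_comm, smul_mul_assoc, one_mul,
    mul_one, one_mul, coe_mul_self]
  module

theorem trace_im_mul_conjTranspose (g : SU2) :
    trace (im g * (im g)ᴴ) = ((2 * (1 - re g ^ 2) : ℝ) : ℂ) := by
  rw [← star_eq_conjTranspose, star_im, mul_neg, im_mul_im, trace_neg, trace_smul, trace_one]
  push_cast
  simp only [Fintype.card_fin, Nat.cast_ofNat, smul_eq_mul]
  ring

theorem re_sq_le_one (g : SU2) : re g ^ 2 ≤ 1 := by
  have h := (posSemidef_self_mul_conjTranspose (im g)).trace_nonneg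
  rw [trace_im_mul_conjTranspose, Complex.zero_le_real] at h
  linarith

theorem coe_eq_re_smul_one {g : SU2} (hg : re g ^ 2 = 1) : (g : M₂) = (re g : ℂ) • 1 := by
  have h : trace (im g * (im g)ᴴ) = 0 := by
    rw [trace_im_mul_conjTranspose, hg]
    simp
  exact sub_eq_zero.mp (trace_mul_conjTranspose_self_eq_zero_iff.mp h)

theorem commute_of_re_sq_eq_one {g : SU2} (hg : re g ^ 2 = 1) (X : SU2) : Commute X g := by
  rw [commute_iff_coe, coe_eq_re_smul_one hg]
  exact (Commute.one_right _).smul_right _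

-- `θ ↦ exp (θ • J)`: when `re J = 0` we have `J * J = -1`.
noncomputable def circle (J : SU2) (hJ : re J = 0) (θ : ℝ) : SU2 :=
  ⟨(Real.cos θ : ℂ) • 1 + (Real.sin θ : ℂ) • (J : M₂),
    smul_one_add_smul_mem J (by rw [hJ]; linear_combination Real.cos_sq_add_sin_sq θ)⟩

section circle

variable {J : SU2} (hJ : re J = 0)

theorem coe_circle (θ : ℝ) :
    (circle J hJ θ : M₂) = (Real.cos θ : ℂ) • 1 + (Real.sin θ : ℂ) • (J : M₂) :=
  rfl

theorem continuous_circle : Continuous (circle J hJ) :=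
  Continuous.subtype_mk (by fun_prop) _

theorem circle_zero : circle J hJ 0 = 1 :=
  Subtype.ext (by simp [coe_circle])

theorem commute_circle {X : SU2} (hX : Commute X J) (θ : ℝ) : Commute X (circle J hJ θ) := by
  rw [commute_iff_coe] at hX
  rw [commute_iff_coe, coe_circle]
  exact hX.smul_one_add_smul_right _ _

theorem joinedIn_circle {S : Set SU2} (hJS : J ∈ S.centralizer) (α : ℝ) :
    JoinedIn S.centralizer 1 (circle J hJ α) := by
  refine ⟨⟨⟨fun t => circle J hJ (t * α), (continuous_circle hJ).comp (by fun_prop)⟩,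
    by simp [circle_zero], by simp⟩, fun t m hm => commute_circle hJ (hJS m hm) _⟩

theorem circle_arccos_re {g : SU2}
    (hg : (g : M₂) = (re g : ℂ) • 1 + (√(1 - re g ^ 2) : ℂ) • (J : M₂)) :
    circle J hJ (Real.arccos (re g)) = g := by
  obtain ⟨h₁, h₂⟩ := abs_le.mp ((sq_le_one_iff_abs_le_one _).mp (re_sq_le_one g))
  exact Subtype.ext (by rw [hg, coe_circle, Real.cos_arccos h₁ h₂, Real.sin_arccos])

end circle

theorem exists_circle_eq_of_re_sq_lt_one {g : SU2} (hg : re g ^ 2 < 1) :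
    ∃ J, ∃ hJ : re J = 0, (∀ X : SU2, Commute X g → Commute X J) ∧
      circle J hJ (Real.arccos (re g)) = g := by
  set s := √(1 - re g ^ 2) with hs
  have hs0 : s ≠ 0 := (Real.sqrt_pos.mpr (by linarith)).ne'
  have hs2 : s ^ 2 = 1 - re g ^ 2 := Real.sq_sqrt (by linarith)
  let J : SU2 := ⟨((-re g / s : ℝ) : ℂ) • 1 + ((1 / s : ℝ) : ℂ) • (g : M₂),
    smul_one_add_smul_mem g (by field_simp; linear_combination -hs2)⟩
  have hJ : re J = 0 := by
    have htrace : trace (J : M₂) = 0 := by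
      simp only [J, trace_add, trace_smul, trace_one, trace_coe, Fintype.card_fin, smul_eq_mul]
      push_cast
      field_simp
      ring
    simp [re, htrace]
  refine ⟨J, hJ, fun X hX => ?_, circle_arccos_re hJ ?_⟩
  · rw [commute_iff_coe] at hX ⊢
    exact hX.smul_one_add_smul_right _ _
  · have hs0' : (s : ℂ) ≠ 0 := by exact_mod_cast hs0
    rw [← hs]
    simp only [J, smul_add, smul_smul]
    push_cast
    field_simp
    module

theorem exists_re_eq_zero_mem_centralizer {S : Set SU2} (hS : S ⊆ S.centralizer) :
    ∃ J : SU2, re J = 0 ∧ J ∈ S.centralizer := by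
  by_cases hcentral : ∀ g ∈ S, re g ^ 2 = 1
  · refine ⟨⟨!![Complex.I, 0; 0, -Complex.I], ?_⟩, ?_,
      fun m hm => (commute_of_re_sq_eq_one (hcentral m hm) _).symm⟩
    · rw [mem_specialUnitaryGroup_iff_star_eq_adjugate, det_fin_two_of, adjugate_fin_two_of]
      refine ⟨by simp, ?_⟩
      ext i j
      fin_cases i <;> fin_cases j <;> simp
    · simp [re, trace_fin_two_of]
  · push Not at hcentral
    obtain ⟨g, hgS, hg⟩ := hcentral
    obtain ⟨J, hJ, hJg, -⟩ :=
      exists_circle_eq_of_re_sq_lt_one (lt_of_le_of_ne (re_sq_le_one g) hg)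
    exact ⟨J, hJ, fun m hm => hJg m (hS hgS m hm)⟩

theorem joinedIn_one_of_mem_centralizer {S : Set SU2} (hS : S ⊆ S.centralizer) {g : SU2}
    (hg : g ∈ S.centralizer) : JoinedIn S.centralizer 1 g := by
  by_cases hre : re g ^ 2 < 1
  · obtain ⟨J, hJ, hJg, hJα⟩ := exists_circle_eq_of_re_sq_lt_one hre
    rw [← hJα]
    exact joinedIn_circle hJ (fun m hm => hJg m (hg m hm)) _
  · obtain ⟨J, hJ, hJS⟩ := exists_re_eq_zero_mem_centralizer hS
    have hre1 : re g ^ 2 = 1 := le_antisymm (re_sq_le_one g) (not_lt.mp hre)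
    rw [← circle_arccos_re hJ (g := g) (by simp [coe_eq_re_smul_one hre1, hre1])]
    exact joinedIn_circle hJ hJS _

end SU2

open SU2 in
theorem isPathConnected_commuting_triples (n : ℕ) :
    IsPathConnected {p : SU2 × SU2 × SU2 |
      Commute (p.1 ^ n) p.2.1 ∧ Commute (p.1 ^ n) p.2.2 ∧ Commute p.2.1 p.2.2} := by
  refine ⟨(1, 1, 1), by simp, ?_⟩
  rintro ⟨A, B, C⟩ ⟨hAB, hAC, hBC⟩
  simp only [commute_iff_eq] at hAB hAC hBC
  refine ((JoinedIn.trans (y := (A, 1, 1)) ?_ ?_).trans (y := (A, B, 1)) ?_)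
  · refine ((joinedIn_one_of_mem_centralizer (S := ∅) (by simp) (by simp)).map
      (f := fun x => (x, 1, 1)) (by fun_prop)).mono ?_
    rintro _ ⟨x, -, rfl⟩
    simp
  · refine ((joinedIn_one_of_mem_centralizer (S := {A ^ n}) (by simp [Set.mem_centralizer_iff])
      (by simpa [Set.mem_centralizer_iff] using hAB)).map (f := fun x => (A, x, 1))
      (by fun_prop)).mono ?_
    rintro _ ⟨x, hx, rfl⟩
    simpa [Set.mem_centralizer_iff, commute_iff_eq] using hx
  · refine ((joinedIn_one_of_mem_centralizer (S := {A ^ n, B})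
      (by simp [Set.insert_subset_iff, Set.mem_centralizer_iff, hAB])
      (by simp [Set.mem_centralizer_iff, hAC, hBC])).map (f := fun x => (A, B, x))
      (by fun_prop)).mono ?_
    rintro _ ⟨x, hx, rfl⟩
    simpa [Set.mem_centralizer_iff, commute_iff_eq, hAB] using hx

/-- For every natural number `n`, the subspace of `SU(2)³` of triples `(A, B, C)` with
`Aⁿ` commuting with `B` and `C`, and `B` commuting with `C`, is connected. -/
theorem connected_closure_D0 (n : ℕ) :
    ConnectedSpace {p : SU2 × SU2 × SU2 |
      p.1 ^ n * p.2.1 = p.2.1 * p.1 ^ n ∧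
      p.1 ^ n * p.2.2 = p.2.2 * p.1 ^ n ∧
      p.2.1 * p.2.2 = p.2.2 * p.2.1} :=
  Subtype.connectedSpace (isPathConnected_commuting_triples n).isConnected
end

section
/- Let n be a natural number, let ε ∈ SU(2) with ε = 1 or ε = -1, and suppose the tuple (T, A₁, B₁, A₂, B₂, A₃, B₃) ∈ SU(2)^7 satisfies system (★ₙ), that T*Xⁿ = ε where X := [A₃,B₃]*A₁, and that T ≠ 1 and T ≠ -1. Then: [A₃,B₃] = [B₁,A₁]; A₂, B₂, and T pairwise commute (A₂*T = T*A₂, B₂*T = T*B₂, and A₂*B₂ = B₂*A₂); and T = ε*B₁*A₁⁻ⁿ*B₁⁻¹. -/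
/-- System `(★ₙ)` for a tuple `(T, A₁, B₁, A₂, B₂, A₃, B₃) ∈ SU(2)⁷`, where
`X := [A₃,B₃]·A₁` (natural-number powers). -/
def starSys (n : ℕ) (T A₁ B₁ A₂ B₂ A₃ B₃ : SU2) : Prop :=
  brk A₁ B₁ * brk A₂ B₂ * brk A₃ B₃ = 1 ∧
  T⁻¹ * A₁ * T = (brk A₃ B₃ * A₁) ^ n * A₁ * ((brk A₃ B₃ * A₁) ^ n)⁻¹ ∧
  T⁻¹ * B₁ * T = B₁ * A₁ ^ n * ((brk A₃ B₃ * A₁) ^ n)⁻¹ ∧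
  T⁻¹ * A₂ * T = A₂ ∧
  T⁻¹ * B₂ * T = B₂ ∧
  T⁻¹ * A₃ * T = (brk A₃ B₃ * A₁) ^ n * A₃ * ((brk A₃ B₃ * A₁) ^ n)⁻¹ ∧
  T⁻¹ * B₃ * T = (brk A₃ B₃ * A₁) ^ n * B₃ * ((brk A₃ B₃ * A₁) ^ n)⁻¹

lemma exists_lin (M P : Matrix (Fin 2) (Fin 2) ℂ)
    (hns : ¬(M 0 1 = 0 ∧ M 1 0 = 0 ∧ M 0 0 = M 1 1))
    (hP : P * M = M * P) :
    ∃ α β : ℂ, P = α • (1 : Matrix (Fin 2) (Fin 2) ℂ) + β • M := by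
  have e : ∀ i j, (P * M) i j = (M * P) i j := fun i j => by rw [hP]
  have e00 := e 0 0; have e01 := e 0 1; have e10 := e 1 0; have e11 := e 1 1
  simp only [Matrix.mul_apply, Fin.sum_univ_two] at e00 e01 e10 e11
  by_cases h01 : M 0 1 ≠ 0
  · refine ⟨P 0 0 - (P 0 1 / M 0 1) * M 0 0, P 0 1 / M 0 1, ?_⟩
    ext i j
    fin_cases i <;> fin_cases j <;>
      simp only [Matrix.add_apply, Matrix.smul_apply, Matrix.one_apply_eq,
        Matrix.one_apply_ne, smul_eq_mul, Fin.mk_zero, Fin.mk_one, ne_eq,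
        not_false_eq_true, one_ne_zero, zero_ne_one,
        mul_zero, mul_one, add_zero, zero_add]
    · ring
    · field_simp
    · field_simp; linear_combination -e00
    · field_simp; linear_combination -e01
  by_cases h10 : M 1 0 ≠ 0
  · refine ⟨P 1 1 - (P 1 0 / M 1 0) * M 1 1, P 1 0 / M 1 0, ?_⟩
    ext i j
    fin_cases i <;> fin_cases j <;>
      simp only [Matrix.add_apply, Matrix.smul_apply, Matrix.one_apply_eq,
        Matrix.one_apply_ne, smul_eq_mul, Fin.mk_zero, Fin.mk_one, ne_eq,
        not_false_eq_true, one_ne_zero, zero_ne_one,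
        mul_zero, mul_one, add_zero, zero_add]
    · field_simp; linear_combination -e10
    · field_simp; linear_combination -e11
    · field_simp
    · ring
  push_neg at h01 h10
  have hd : M 0 0 ≠ M 1 1 := fun h => hns ⟨h01, h10, h⟩
  have hsub : M 0 0 - M 1 1 ≠ 0 := sub_ne_zero.mpr hd
  have hp01 : P 0 1 = 0 := by
    have h : P 0 1 * (M 1 1 - M 0 0) = 0 := by
      linear_combination e01 + (P 1 1 - P 0 0) * h01
    rcases mul_eq_zero.mp h with h' | h'
    · exact h'
    · exact absurd (by linear_combination -h') hsub
  have hp10 : P 1 0 = 0 := by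
    have h : P 1 0 * (M 0 0 - M 1 1) = 0 := by
      linear_combination e10 + (P 0 0 - P 1 1) * h10
    rcases mul_eq_zero.mp h with h' | h'
    · exact h'
    · exact absurd h' hsub
  refine ⟨P 1 1 - ((P 0 0 - P 1 1) / (M 0 0 - M 1 1)) * M 1 1,
    (P 0 0 - P 1 1) / (M 0 0 - M 1 1), ?_⟩
  ext i j
  fin_cases i <;> fin_cases j <;>
    simp only [Matrix.add_apply, Matrix.smul_apply, Matrix.one_apply_eq,
      Matrix.one_apply_ne, smul_eq_mul, Fin.mk_zero, Fin.mk_one, ne_eq,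
      not_false_eq_true, one_ne_zero, zero_ne_one,
      mul_zero, mul_one, add_zero, zero_add, h01, h10, hp01, hp10]
  · field_simp; ring
  · ring

lemma comm_of_comm (M P Q : Matrix (Fin 2) (Fin 2) ℂ)
    (hns : ¬(M 0 1 = 0 ∧ M 1 0 = 0 ∧ M 0 0 = M 1 1))
    (hP : P * M = M * P) (hQ : Q * M = M * Q) : P * Q = Q * P := by
  obtain ⟨α, β, rfl⟩ := exists_lin M P hns hP
  obtain ⟨γ, δ, rfl⟩ := exists_lin M Q hns hQ
  simp only [add_mul, mul_add, smul_mul_assoc, Matrix.mul_smul, one_mul, mul_one, smul_smul]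
  ring_nf
  abel

lemma su2_nonscalar (T : Matrix.specialUnitaryGroup (Fin 2) ℂ)
    (hT1 : T ≠ 1) (hTm1 : (T : Matrix (Fin 2) (Fin 2) ℂ) ≠ -1) :
    ¬((T : Matrix (Fin 2) (Fin 2) ℂ) 0 1 = 0 ∧ (T : Matrix (Fin 2) (Fin 2) ℂ) 1 0 = 0 ∧
      (T : Matrix (Fin 2) (Fin 2) ℂ) 0 0 = (T : Matrix (Fin 2) (Fin 2) ℂ) 1 1) := by
  rintro ⟨h1, h2, h3⟩
  have hdet : (T : Matrix (Fin 2) (Fin 2) ℂ).det = 1 := T.2.2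
  rw [Matrix.det_fin_two, h1, h2, ← h3] at hdet
  have hsq : ((T : Matrix (Fin 2) (Fin 2) ℂ) 0 0 - 1) * ((T : Matrix (Fin 2) (Fin 2) ℂ) 0 0 + 1) = 0 := by
    linear_combination hdet
  rcases mul_eq_zero.mp hsq with h | h
  · apply hT1
    apply Subtype.ext
    have h00 : (T : Matrix (Fin 2) (Fin 2) ℂ) 0 0 = 1 := by linear_combination h
    ext i j
    fin_cases i <;> fin_cases j <;>
      simp [h1, h2, h00, ← h3, Matrix.one_apply]
  · apply hTm1
    have h00 : (T : Matrix (Fin 2) (Fin 2) ℂ) 0 0 = -1 := by linear_combination h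
    ext i j
    fin_cases i <;> fin_cases j <;>
      simp [h1, h2, h00, ← h3, Matrix.one_apply]

/-- On the stratum where `T·Xⁿ = ε` is central but `T` is not, system `(★ₙ)` forces
`[A₃,B₃] = [B₁,A₁]`, the elements `A₂, B₂, T` pairwise commute, and
`T = ε·B₁·A₁⁻ⁿ·B₁⁻¹`. -/
theorem stratum_F_epsilon_description (n : ℕ) (ε : SU2)
    (hε : ε = 1 ∨ (ε : Matrix (Fin 2) (Fin 2) ℂ) = -1)
    (T A₁ B₁ A₂ B₂ A₃ B₃ : SU2)
    (hstar : starSys n T A₁ B₁ A₂ B₂ A₃ B₃)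
    (hTX : T * (brk A₃ B₃ * A₁) ^ n = ε)
    (hT1 : T ≠ 1) (hTm1 : (T : Matrix (Fin 2) (Fin 2) ℂ) ≠ -1) :
    brk A₃ B₃ = brk B₁ A₁ ∧
    A₂ * T = T * A₂ ∧ B₂ * T = T * B₂ ∧ A₂ * B₂ = B₂ * A₂ ∧
    T = ε * B₁ * (A₁ ^ n)⁻¹ * B₁⁻¹ := by
  obtain ⟨h0, hA1, h2, h3, h4, hA3, hB3⟩ := hstar
  set Y : SU2 := (brk A₃ B₃ * A₁) ^ n with hYdef
  -- centrality of ε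
  have hcen : ∀ g : SU2, ε * g = g * ε := by
    rcases hε with rfl | hm
    · intro g; rw [one_mul, mul_one]
    · intro g
      apply Subtype.ext
      show (ε : Matrix (Fin 2) (Fin 2) ℂ) * g = (g : Matrix (Fin 2) (Fin 2) ℂ) * ε
      rw [hm, neg_one_mul, mul_neg_one]
  have hfix : ∀ g : SU2, ε⁻¹ * g * ε = g := fun g => by
    rw [mul_assoc, ← hcen g, ← mul_assoc, inv_mul_cancel, one_mul]
  have hT : T = ε * Y⁻¹ := eq_mul_inv_of_mul_eq hTX
  have hTinv : T⁻¹ = Y * ε⁻¹ := by rw [hT, mul_inv_rev, inv_inv]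
  -- A₂, B₂ commute with T
  have hA2T : A₂ * T = T * A₂ := by
    have h := congrArg (T * ·) h3
    simpa [← mul_assoc, mul_inv_cancel] using h

  have hB2T : B₂ * T = T * B₂ := by
    have h := congrArg (T * ·) h4
    simpa [← mul_assoc, mul_inv_cancel] using h

  -- Y = B₁ * A₁^n * B₁⁻¹
  have h2' : Y * B₁ * Y⁻¹ = B₁ * A₁ ^ n * Y⁻¹ := by
    rw [hTinv, hT] at h2
    calc Y * B₁ * Y⁻¹ = Y * (ε⁻¹ * B₁ * ε) * Y⁻¹ := by rw [hfix]
      _ = Y * ε⁻¹ * B₁ * (ε * Y⁻¹) := by group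
      _ = _ := h2
  have hYB : Y = B₁ * A₁ ^ n * B₁⁻¹ := by
    have h := mul_right_cancel h2'
    rw [← h]; group
  have hTval : T = ε * B₁ * (A₁ ^ n)⁻¹ * B₁⁻¹ := by
    rw [hT, hYB]; group
  -- A₂ B₂ commute
  have hns := su2_nonscalar T hT1 hTm1
  have hA2B2 : A₂ * B₂ = B₂ * A₂ := by
    apply Subtype.ext
    exact comm_of_comm T.1 A₂.1 B₂.1 hns (congrArg Subtype.val hA2T)
      (congrArg Subtype.val hB2T)
  -- brk A₃ B₃ = brk B₁ A₁
  have hbrk2 : brk A₂ B₂ = 1 := by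
    unfold brk; rw [hA2B2]; group
  refine ⟨?_, hA2T, hB2T, hA2B2, hTval⟩
  rw [hbrk2, mul_one] at h0
  have : brk A₃ B₃ = (brk A₁ B₁)⁻¹ := eq_inv_of_mul_eq_one_right (by rw [← h0])
  rw [this]; unfold brk; group
end

section
/- Let n be a natural number and suppose the tuple (T, A₁, B₁, A₂, B₂, A₃, B₃) ∈ SU(2)^7 satisfies system (★ₙ), that T ≠ 1 and T ≠ -1, and that T*Xⁿ ≠ 1 and T*Xⁿ ≠ -1, where X := [A₃,B₃]*A₁. Then the seven elements T, A₁, B₁, A₂, B₂, A₃, B₃ pairwise commute. -/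
/-- Any `2 × 2` complex matrix commuting with a non-scalar matrix `g` lies in the span
of `1` and `g`. -/
lemma span_of_comm' (g a : Matrix (Fin 2) (Fin 2) ℂ)
    (hg : ∀ c : ℂ, g ≠ c • 1) (ha : a * g = g * a) :
    ∃ α β : ℂ, a = α • 1 + β • g := by
  have e00 : a 0 0 * g 0 0 + a 0 1 * g 1 0 = g 0 0 * a 0 0 + g 0 1 * a 1 0 := by
    simpa [Matrix.mul_apply, Fin.sum_univ_two] using Matrix.ext_iff.mpr ha 0 0
  have e01 : a 0 0 * g 0 1 + a 0 1 * g 1 1 = g 0 0 * a 0 1 + g 0 1 * a 1 1 := by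
    simpa [Matrix.mul_apply, Fin.sum_univ_two] using Matrix.ext_iff.mpr ha 0 1
  have e10 : a 1 0 * g 0 0 + a 1 1 * g 1 0 = g 1 0 * a 0 0 + g 1 1 * a 1 0 := by
    simpa [Matrix.mul_apply, Fin.sum_univ_two] using Matrix.ext_iff.mpr ha 1 0
  have e11 : a 1 0 * g 0 1 + a 1 1 * g 1 1 = g 1 0 * a 0 1 + g 1 1 * a 1 1 := by
    simpa [Matrix.mul_apply, Fin.sum_univ_two] using Matrix.ext_iff.mpr ha 1 1
  by_cases hq : g 0 1 = 0
  · by_cases hr : g 1 0 = 0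
    · have hps : g 0 0 - g 1 1 ≠ 0 := by
        intro h
        apply hg (g 0 0)
        ext i j
        fin_cases i <;> fin_cases j <;>
          simp [Matrix.smul_apply, Matrix.one_apply, hq, hr, sub_eq_zero.mp h]
      simp only [hq, hr, mul_zero, zero_mul, add_zero, zero_add] at e00 e01 e10 e11
      have ha01 : a 0 1 = 0 := by
        have h : a 0 1 * (g 0 0 - g 1 1) = 0 := by linear_combination -e01
        rcases mul_eq_zero.mp h with h' | h'
        · exact h'
        · exact (hps h').elim
      have ha10 : a 1 0 = 0 := by
        have h : a 1 0 * (g 0 0 - g 1 1) = 0 := by linear_combination e10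
        rcases mul_eq_zero.mp h with h' | h'
        · exact h'
        · exact (hps h').elim
      refine ⟨a 0 0 - g 0 0 * ((a 0 0 - a 1 1) / (g 0 0 - g 1 1)),
        (a 0 0 - a 1 1) / (g 0 0 - g 1 1), ?_⟩
      ext i j
      fin_cases i <;> fin_cases j <;>
        simp [Matrix.add_apply, Matrix.smul_apply, Matrix.one_apply, ha01, ha10, hq, hr] <;>
        field_simp <;> ring
    · refine ⟨a 0 0 - a 1 0 * g 0 0 / g 1 0, a 1 0 / g 1 0, ?_⟩
      ext i j
      fin_cases i <;> fin_cases j <;>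
        simp [Matrix.add_apply, Matrix.smul_apply, Matrix.one_apply] <;>
        field_simp <;>
        first
          | linear_combination e11 | linear_combination -e11
          | linear_combination e10 | linear_combination -e10
          | ring
  · refine ⟨a 0 0 - a 0 1 * g 0 0 / g 0 1, a 0 1 / g 0 1, ?_⟩
    ext i j
    fin_cases i <;> fin_cases j <;>
      simp [Matrix.add_apply, Matrix.smul_apply, Matrix.one_apply] <;>
      field_simp <;>
      first
        | linear_combination e00 | linear_combination -e00
        | linear_combination e01 | linear_combination -e01
        | ring

/-- Two matrices commuting with a common non-scalar `2 × 2` matrix commute. -/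
lemma matrix_comm' (g a b : Matrix (Fin 2) (Fin 2) ℂ)
    (hg : ∀ c : ℂ, g ≠ c • 1) (ha : a * g = g * a) (hb : b * g = g * b) :
    a * b = b * a := by
  obtain ⟨α, β, rfl⟩ := span_of_comm' g a hg ha
  obtain ⟨γ, δ, rfl⟩ := span_of_comm' g b hg hb
  simp only [add_mul, mul_add, smul_mul_assoc, Matrix.mul_smul, one_mul, mul_one, smul_smul]
  module

/-- An element of `SU(2)` that is not `±1` is not a scalar matrix. -/
lemma su2_nonscalar' (g : SU2) (hg1 : g ≠ 1)
    (hgm1 : (g : Matrix (Fin 2) (Fin 2) ℂ) ≠ -1) :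
    ∀ c : ℂ, (g : Matrix (Fin 2) (Fin 2) ℂ) ≠ c • 1 := by
  intro c hc
  have hdet : (g : Matrix (Fin 2) (Fin 2) ℂ).det = 1 := g.2.2
  rw [hc, Matrix.det_smul, Matrix.det_one, mul_one] at hdet
  have hc2 : c ^ 2 = 1 := by simpa using hdet
  have : (c - 1) * (c + 1) = 0 := by linear_combination hc2
  rcases mul_eq_zero.mp this with h | h
  · have hc1 : c = 1 := by linear_combination h
    apply hg1
    apply Subtype.ext
    rw [hc, hc1, one_smul]
    rfl
  · have hc1 : c = -1 := by linear_combination h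
    apply hgm1
    rw [hc, hc1, neg_smul, one_smul]

/-- The centralizer of a non-central element of `SU(2)` is abelian. -/
lemma su2_comm' (g : SU2) (hg1 : g ≠ 1)
    (hgm1 : (g : Matrix (Fin 2) (Fin 2) ℂ) ≠ -1)
    (a b : SU2) (ha : a * g = g * a) (hb : b * g = g * b) : a * b = b * a := by
  apply Subtype.ext
  have ha' : (a : Matrix (Fin 2) (Fin 2) ℂ) * g = g * a := congrArg Subtype.val ha
  have hb' : (b : Matrix (Fin 2) (Fin 2) ℂ) * g = g * b := congrArg Subtype.val hb
  exact matrix_comm' g a b (su2_nonscalar' g hg1 hgm1) ha' hb'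

/-- If a tuple satisfies system `(★ₙ)` and neither `T` nor `T·Xⁿ` is central
(`≠ 1` and `≠ -1`), then the seven coordinates pairwise commute. -/
theorem stratum_F0_all_commute (n : ℕ) (T A₁ B₁ A₂ B₂ A₃ B₃ : SU2)
    (hstar : starSys n T A₁ B₁ A₂ B₂ A₃ B₃)
    (hT1 : T ≠ 1) (hTm1 : (T : Matrix (Fin 2) (Fin 2) ℂ) ≠ -1)
    (hTX1 : T * (brk A₃ B₃ * A₁) ^ n ≠ 1)
    (hTXm1 : ((T * (brk A₃ B₃ * A₁) ^ n : SU2) : Matrix (Fin 2) (Fin 2) ℂ) ≠ -1) :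
    ∀ x ∈ [T, A₁, B₁, A₂, B₂, A₃, B₃], ∀ y ∈ [T, A₁, B₁, A₂, B₂, A₃, B₃],
      x * y = y * x := by
  obtain ⟨-, h2, h3, h4, h5, h6, h7⟩ := hstar
  set X : SU2 := brk A₃ B₃ * A₁ with hX
  set S : SU2 := T * X ^ n with hS
  -- A₁, A₃, B₃ commute with S = T·Xⁿ
  have cS1 : A₁ * S = S * A₁ := by
    calc A₁ * (T * X ^ n) = T * (T⁻¹ * A₁ * T) * X ^ n := by group
      _ = T * (X ^ n * A₁ * (X ^ n)⁻¹) * X ^ n := by rw [h2]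
      _ = (T * X ^ n) * A₁ := by group
  have cS3 : A₃ * S = S * A₃ := by
    calc A₃ * (T * X ^ n) = T * (T⁻¹ * A₃ * T) * X ^ n := by group
      _ = T * (X ^ n * A₃ * (X ^ n)⁻¹) * X ^ n := by rw [h6]
      _ = (T * X ^ n) * A₃ := by group
  have cS4 : B₃ * S = S * B₃ := by
    calc B₃ * (T * X ^ n) = T * (T⁻¹ * B₃ * T) * X ^ n := by group
      _ = T * (X ^ n * B₃ * (X ^ n)⁻¹) * X ^ n := by rw [h7]
      _ = (T * X ^ n) * B₃ := by group
  have keyS := su2_comm' S hTX1 hTXm1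
  -- A₃ and B₃ commute, so [A₃,B₃] = 1 and X = A₁
  have c33 : A₃ * B₃ = B₃ * A₃ := keyS A₃ B₃ cS3 cS4
  have hbrk : brk A₃ B₃ = 1 := by rw [brk, c33]; group
  have hXA : X = A₁ := by rw [hX, hbrk, one_mul]
  rw [hXA] at hS h3
  -- anything commuting with A₁ and S commutes with T
  have cTofS : ∀ a : SU2, a * A₁ = A₁ * a → a * S = S * a → a * T = T * a := by
    intro a h1 hs
    have hpow : a * A₁ ^ n = A₁ ^ n * a := Commute.pow_right h1 n
    have key : a * T * A₁ ^ n = T * a * A₁ ^ n := by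
      calc a * T * A₁ ^ n = a * S := by rw [hS, mul_assoc]
        _ = S * a := hs
        _ = T * (A₁ ^ n * a) := by rw [hS]; group
        _ = T * (a * A₁ ^ n) := by rw [hpow]
        _ = T * a * A₁ ^ n := by group
    exact mul_right_cancel key
  have cT1 : A₁ * T = T * A₁ := cTofS A₁ rfl cS1
  have cT3 : A₃ * T = T * A₃ := cTofS A₃ (keyS A₃ A₁ cS3 cS1) cS3
  have cT4 : B₃ * T = T * B₃ := cTofS B₃ (keyS B₃ A₁ cS4 cS1) cS4
  -- B₁, A₂, B₂ commute with T
  have h3' : T⁻¹ * B₁ * T = B₁ := by simpa using h3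
  have cTB1 : B₁ * T = T * B₁ := by
    calc B₁ * T = T * (T⁻¹ * B₁ * T) := by group
      _ = T * B₁ := by rw [h3']
  have cTA2 : A₂ * T = T * A₂ := by
    calc A₂ * T = T * (T⁻¹ * A₂ * T) := by group
      _ = T * A₂ := by rw [h4]
  have cTB2 : B₂ * T = T * B₂ := by
    calc B₂ * T = T * (T⁻¹ * B₂ * T) := by group
      _ = T * B₂ := by rw [h5]
  -- all seven lie in the abelian centralizer of T
  have keyT := su2_comm' T hT1 hTm1
  intro x hx y hy
  simp only [List.mem_cons, List.not_mem_nil, or_false] at hx hy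
  rcases hx with rfl | rfl | rfl | rfl | rfl | rfl | rfl <;>
    rcases hy with rfl | rfl | rfl | rfl | rfl | rfl | rfl <;>
    (apply keyT <;> first | rfl | assumption)
end
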